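/- Let q, m, v₀, v₁ be natural numbers with v₀ < m and v₁ < m, and let S be any set of natural numbers (with decidable membership). Then the absolute difference between the number of u ∈ {0, 1, …, q−1} with u + v₀ ∈ S and the number of u ∈ {0, 1, …, q−1} with u + v₁ ∈ S is at most m. -/

import Mathlib

/-!
Translating by `v` turns the count of keys `u < q` with `u + v ∈ S` into the number of
elements of `S` in the window `[v, v + q)`. Two windows of the same length starting at
`v₀` and `v₁` differ by at most `|v₀ - v₁| < m` points, so their counts do as well.
-/

open Finset

lemma card_filter_range_add_eq_card_filter_Ico (p : ℕ → Prop) [DecidablePred p] (q v : ℕ) :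
    #{u ∈ range q | p (u + v)} = #{w ∈ Ico v (v + q) | p w} := by
  have hwindow : Ico v (v + q) = (range q).map (addRightEmbedding v) := by
    rw [range_eq_Ico, map_add_right_Ico, zero_add, add_comm]
  rw [hwindow, filter_map, card_map]
  rfl

lemma card_filter_Ico_le_card_filter_Ico_add (p : ℕ → Prop) [DecidablePred p] (q a b : ℕ) :
    #{x ∈ Ico a (a + q) | p x} ≤ #{x ∈ Ico b (b + q) | p x} + (b - a) + (a - b) := by
  have hcover : {x ∈ Ico a (a + q) | p x} ⊆
      {x ∈ Ico b (b + q) | p x} ∪ (Ico a b ∪ Ico (b + q) (a + q)) := by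
    intro x hx
    rw [mem_filter, mem_Ico] at hx
    rw [mem_union, mem_union, mem_filter, mem_Ico, mem_Ico, mem_Ico]
    by_cases hb : b ≤ x ∧ x < b + q
    · exact Or.inl ⟨hb, hx.2⟩
    · omega
  calc #{x ∈ Ico a (a + q) | p x}
      ≤ #{x ∈ Ico b (b + q) | p x} + (#(Ico a b) + #(Ico (b + q) (a + q))) :=
        (card_le_card hcover).trans <| (card_union_le _ _).trans <|
          Nat.add_le_add_left (card_union_le _ _) _
    _ = #{x ∈ Ico b (b + q) | p x} + (b - a) + (a - b) := by
        rw [Nat.card_Ico, Nat.card_Ico]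
        omega

/-- Statistical receipt freeness of the revealed value `w = u + v`: for any
acceptance set `S`, the counts of keys `u ∈ [0, q)` with `u + v₀ ∈ S` and with
`u + v₁ ∈ S` differ by at most `m`. -/
theorem receipt_freeness_statistical (q m v₀ v₁ : ℕ)
    (hv₀ : v₀ < m) (hv₁ : v₁ < m) (S : Set ℕ) [DecidablePred (· ∈ S)] :
    ((((Finset.range q).filter (fun u => u + v₀ ∈ S)).card : ℤ) -
      (((Finset.range q).filter (fun u => u + v₁ ∈ S)).card : ℤ)).natAbs ≤ m := by
  rw [card_filter_range_add_eq_card_filter_Ico (· ∈ S),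
    card_filter_range_add_eq_card_filter_Ico (· ∈ S)]
  have h₀₁ := card_filter_Ico_le_card_filter_Ico_add (· ∈ S) q v₀ v₁
  have h₁₀ := card_filter_Ico_le_card_filter_Ico_add (· ∈ S) q v₁ v₀
  omega
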